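/- arXiv:1904.09560 — 5 statements merged into one kernel-verified Lean document; each statement's English description precedes it below -/
import Mathlib

section
/- Fix an integer k ≥ 3 and a prime p ≥ 3. Then for any positive integer n, the size of any k-colored sum-free set in 𝔽_p^n is at most Γ_{p,k}^n. -/
/-
Following Tao's symmetric formulation of the Croot–Lev–Pach / Ellenberg–Gijswijt method, consider
the tensor `T(i₁, …, i_k) = [x_{1,i₁} + ⋯ + x_{k,i_k} = 0]` on `{1, …, L}^k`. Sum-freeness says
that `T` is diagonal with nonzero diagonal, so its slice rank is `L`. Over `𝔽_p`,
`T = ∏_{coordinates} (1 - (x_{1,i₁} + ⋯ + x_{k,i_k})^{p-1})`; expanding, every monomial has total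
degree at most `(p-1) n`, so some colour `j` carries degree at most `(p-1) n / k`, and the monomial
is a slice in the coordinate `j`. Grouping by `j` and the exponents of colour `j` gives
`L ≤ k · #{a ∈ {0,…,p-1}^n : ∑ a ≤ (p-1) n / k}`, and weighting each such `a` by `t^{∑ a}`
bounds the count by `Γ_{p,k}^n`. Applying this to the `r`-fold tensor power of the sum-free set
gives `L^r ≤ k Γ_{p,k}^{r n}` for all `r`, which removes the factor `k`.
-/

/-- `Γ_{p,k} = inf_{0<t<1} (1 + t + ⋯ + t^{p-1}) / t^{(p-1)/k}`. -/
noncomputable def GammaPK (p k : ℕ) : ℝ :=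
  sInf ((fun t : ℝ => (∑ i ∈ Finset.range p, t ^ i) / t ^ (((p : ℝ) - 1) / k)) '' Set.Ioo 0 1)

open Finset Function

section SliceRank

open Matrix

variable {F : Type*} [Field F] {ι : Type*} {m : ℕ}

theorem Submodule.exists_mem_finrank_le_card_support [DecidableEq F] [Fintype ι]
    (W : Submodule F (ι → F)) : ∃ h ∈ W, Module.finrank F W ≤ #{i | h i ≠ 0} := by
  classical
  -- any vector of `W` vanishing on the support of a vector `h` of maximal support is zero
  obtain ⟨h, hW, hmax⟩ : ∃ h ∈ W, ∀ w ∈ W, #{i | w i ≠ 0} ≤ #{i | h i ≠ 0} := by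
    have hbdd : BddAbove ((fun w : ι → F => #{i | w i ≠ 0}) '' W) :=
      ⟨Fintype.card ι, by rintro - ⟨w, -, rfl⟩; exact card_le_univ _⟩
    obtain ⟨h, hW, hh⟩ := Nat.sSup_mem ⟨_, Set.mem_image_of_mem _ W.zero_mem⟩ hbdd
    exact ⟨h, hW, fun w hw => (le_csSup hbdd ⟨w, hw, rfl⟩).trans_eq hh.symm⟩
  set T : Finset ι := {i | h i ≠ 0}
  let ρ : W →ₗ[F] (T → F) := (LinearMap.funLeft F F (Subtype.val : T → ι)).comp W.subtype
  have hρ : Injective ρ := by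
    refine (injective_iff_map_eq_zero ρ).2 fun w hw => ?_
    by_contra hne
    obtain ⟨i₀, hi₀⟩ : ∃ i, (w : ι → F) i ≠ 0 := by
      by_contra! hz
      exact hne (Subtype.ext (funext hz))
    have hwT : ∀ i ∈ T, (w : ι → F) i = 0 := fun i hi => congr_fun hw ⟨i, hi⟩
    have hi₀T : i₀ ∉ T := fun hi => hi₀ (hwT i₀ hi)
    have hsub : insert i₀ T ⊆ ({i | (h + w) i ≠ 0} : Finset ι) := by
      intro i hi
      rcases mem_insert.1 hi with rfl | hi <;> simp_all [T]
    have := card_le_card hsub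
    rw [card_insert_of_notMem hi₀T] at this
    have := hmax _ (W.add_mem hW w.2)
    omega
  refine ⟨h, hW, ?_⟩
  calc Module.finrank F W ≤ Module.finrank F (T → F) := LinearMap.finrank_le_finrank_of_injective hρ
    _ = #T := by simp

theorem Matrix.card_le_card_add_finrank_ker_mulVecLin {κ : Type*} [Fintype κ] [Fintype ι]
    (M : Matrix κ ι F) :
    Fintype.card ι ≤ Fintype.card κ + Module.finrank F (LinearMap.ker M.mulVecLin) := by
  have hrank := M.rank_le_card_height
  have hsum := LinearMap.finrank_range_add_finrank_ker M.mulVecLin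
  rw [Module.finrank_fintype_fun_eq_card] at hsum
  rw [Matrix.rank] at hrank
  omega

lemma sum_mul_apply_snoc_mul_eq_zero [Fintype ι] {f h : ι → F} {g : (Fin (m + 2) → ι) → F}
    (hg : DependsOn g {Fin.last _}ᶜ) (hfh : ∑ ℓ, f ℓ * h ℓ = 0) (w : Fin (m + 1) → ι) :
    ∑ ℓ, f ℓ * g (Fin.snoc w ℓ) * h ℓ = 0 := by
  have hgw : ∀ ℓ, g (Fin.snoc w ℓ) = g (Fin.snoc w (w 0)) := fun ℓ => hg fun j hj => by
    obtain ⟨j, rfl⟩ := Fin.exists_castSucc_eq.2 (hj : j ≠ Fin.last _)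
    simp
  simp_rw [hgw, mul_comm (f _), mul_assoc, ← mul_sum, hfh, mul_zero]

lemma DependsOn.sum_snoc_mul [Fintype ι] {κ : Type*} {g : (Fin (m + 2) → ι) → F}
    {j : Fin (m + 1)} (hg : DependsOn g {j.castSucc}ᶜ) (e : κ → ι) (h : ι → F) :
    DependsOn (fun v : Fin (m + 1) → κ => ∑ ℓ, g (Fin.snoc (e ∘ v) ℓ) * h ℓ) {j}ᶜ := by
  intro v v' hvv'
  refine sum_congr rfl fun ℓ _ => congrArg (· * h ℓ) (hg fun i hi => ?_)
  induction i using Fin.lastCases with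
  | last => simp
  | cast i =>
    have : i ≠ j := fun hij => hi (congrArg Fin.castSucc hij)
    simp [hvv' i this]

variable [DecidableEq ι]

def diagTensor (c : ι → F) (i : Fin (m + 1) → ι) : F :=
  if ∀ j, i j = i 0 then c (i 0) else 0

lemma diagTensor_comp_injective {κ : Type*} [DecidableEq κ] {e : κ → ι} (he : Injective e)
    (c : ι → F) (v : Fin (m + 1) → κ) : diagTensor c (e ∘ v) = diagTensor (c ∘ e) v := by
  simp only [diagTensor, Function.comp_apply, he.eq_iff]

lemma diagTensor_snoc (c : ι → F) (v : Fin (m + 1) → ι) (ℓ : ι) :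
    diagTensor c (Fin.snoc v ℓ : Fin (m + 2) → ι) = if ℓ = v 0 then diagTensor c v else 0 := by
  simp only [diagTensor, Fin.forall_fin_succ' (n := m + 1), Fin.snoc_castSucc, Fin.snoc_last,
    Fin.snoc_apply_zero]
  split_ifs <;> simp_all

lemma sum_diagTensor_snoc_mul [Fintype ι] (c h : ι → F) (v : Fin (m + 1) → ι) :
    ∑ ℓ, diagTensor c (Fin.snoc v ℓ : Fin (m + 2) → ι) * h ℓ = diagTensor (c * h) v := by
  simp_rw [diagTensor_snoc, ite_mul, zero_mul, sum_ite_eq', mem_univ, if_true, diagTensor]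
  split_ifs <;> simp

lemma diagTensor_two_eq_diagonal (c : ι → F) (i j : ι) :
    diagTensor c ![i, j] = diagonal c i j := by
  simp [diagTensor, Fin.forall_fin_two, diagonal_apply, eq_comm]

theorem card_le_of_diagTensor_eq_sum_slices_two [Fintype ι] {α : Type*} {c : ι → F}
    (hc : ∀ i, c i ≠ 0) {S : Finset α} {slot : α → Fin 2} {f : α → ι → F}
    {g : α → (Fin 2 → ι) → F} (hg : ∀ a ∈ S, DependsOn (g a) {slot a}ᶜ)
    (hD : ∀ i, diagTensor c i = ∑ a ∈ S, f a (i (slot a)) * g a i) :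
    Fintype.card ι ≤ #S := by
  classical
  -- a slice of order two is a rank-one matrix, so `diagonal c` factors through `F ^ S`
  let U : Matrix ι S F := of fun i a => if slot a = 0 then f a i else g a ![i, i]
  let V : Matrix S ι F := of fun a j => if slot a = 0 then g a ![j, j] else f a j
  have hUV : diagonal c = U * V := by
    ext i j
    rw [← diagTensor_two_eq_diagonal, hD, mul_apply, ← sum_coe_sort S]
    refine Fintype.sum_congr _ _ fun ⟨a, ha⟩ => ?_
    rcases Fin.exists_fin_two.mp ⟨slot a, rfl⟩ with h0 | h1
    · have : g a ![i, j] = g a ![j, j] := hg a ha fun j' hj' => by fin_cases j' <;> simp_all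
      simp [U, V, h0, this]
    · have : g a ![i, j] = g a ![i, i] := hg a ha fun j' hj' => by fin_cases j' <;> simp_all
      simp [U, V, h1, this, mul_comm]
  calc Fintype.card ι = (diagonal c).rank := by
        rw [rank_diagonal, Fintype.card_congr (Equiv.subtypeUnivEquiv hc)]
    _ ≤ U.rank := hUV ▸ rank_mul_le_left U V
    _ ≤ #S := (rank_le_card_width U).trans_eq (Fintype.card_coe S)

lemma diagTensor_mul_eq_sum_slices_snoc [Fintype ι] {α : Type*} {c h : ι → F} {S : Finset α}
    {slot : α → Fin (m + 2)} {f : α → ι → F} {g : α → (Fin (m + 2) → ι) → F}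
    (hg : ∀ a ∈ S, DependsOn (g a) {slot a}ᶜ)
    (hD : ∀ i, diagTensor c i = ∑ a ∈ S, f a (i (slot a)) * g a i)
    (hfh : ∀ a ∈ S, slot a = Fin.last _ → ∑ ℓ, f a ℓ * h ℓ = 0) (w : Fin (m + 1) → ι) :
    diagTensor (c * h) w = ∑ a ∈ S.subtype (slot · ≠ Fin.last _),
      f a (w ((slot a).castPred a.2)) * ∑ ℓ, g a (Fin.snoc w ℓ) * h ℓ := by
  calc diagTensor (c * h) w
      = ∑ a ∈ S, ∑ ℓ,
          f a ((Fin.snoc w ℓ : Fin (m + 2) → ι) (slot a)) * g a (Fin.snoc w ℓ) * h ℓ := by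
        simp_rw [← sum_diagTensor_snoc_mul, hD, sum_mul]
        exact sum_comm
    _ = ∑ a ∈ S with slot a ≠ Fin.last _, ∑ ℓ,
          f a ((Fin.snoc w ℓ : Fin (m + 2) → ι) (slot a)) * g a (Fin.snoc w ℓ) * h ℓ := by
        refine (sum_filter_of_ne (p := (slot · ≠ Fin.last _)) fun a ha hne hal => hne ?_).symm
        simp only [hal, Fin.snoc_last]
        exact sum_mul_apply_snoc_mul_eq_zero (hal ▸ hg a ha) (hfh a ha hal) w
    _ = _ := by
        rw [← sum_subtype_eq_sum_filter]
        refine sum_congr rfl fun a _ => ?_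
        rw [mul_sum]
        refine sum_congr rfl fun ℓ _ => ?_
        have e := Fin.snoc_castSucc (α := fun _ => ι) ℓ w ((slot a).castPred a.2)
        rw [Fin.castSucc_castPred] at e
        rw [e, mul_assoc]

theorem card_le_of_diagTensor_eq_sum_slices [Fintype ι] {α : Type*} {c : ι → F}
    (hc : ∀ i, c i ≠ 0) {S : Finset α} {slot : α → Fin (m + 2)} {f : α → ι → F}
    {g : α → (Fin (m + 2) → ι) → F} (hg : ∀ a ∈ S, DependsOn (g a) {slot a}ᶜ)
    (hD : ∀ i, diagTensor c i = ∑ a ∈ S, f a (i (slot a)) * g a i) :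
    Fintype.card ι ≤ #S := by
  induction m generalizing ι α with
  | zero => exact card_le_of_diagTensor_eq_sum_slices_two hc hg hD
  | succ m ih =>
  classical
  -- Contract the last coordinate against a vector `h` orthogonal to the `f a` with `a` sliced
  -- in that coordinate; on the support of `h` this leaves a diagonal tensor of lower order.
  let M : Matrix ({a ∈ S | slot a = Fin.last _} : Finset α) ι F := of fun a ℓ => f a ℓ
  obtain ⟨h, hh, hT⟩ := (LinearMap.ker M.mulVecLin).exists_mem_finrank_le_card_support
  have hfh : ∀ a ∈ S, slot a = Fin.last _ → ∑ ℓ, f a ℓ * h ℓ = 0 := fun a ha hal =>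
    congr_fun (LinearMap.mem_ker.1 hh) ⟨a, mem_filter.2 ⟨ha, hal⟩⟩
  set T : Finset ι := {i | h i ≠ 0}
  have hS' : Fintype.card T ≤ #(S.subtype (slot · ≠ Fin.last _)) := by
    refine ih (c := fun t : T => c t * h t) (fun t => mul_ne_zero (hc t) (mem_filter.1 t.2).2)
      (slot := fun a => (slot a).castPred a.2) (f := fun a t => f a t)
      (g := fun a v => ∑ ℓ, g a (Fin.snoc (Subtype.val ∘ v) ℓ) * h ℓ) (fun a ha => ?_) fun v => ?_
    · refine DependsOn.sum_snoc_mul ?_ _ h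
      rw [Fin.castSucc_castPred]
      exact hg a (mem_subtype.1 ha)
    · refine (diagTensor_comp_injective Subtype.val_injective (c * h) v).symm.trans ?_
      exact diagTensor_mul_eq_sum_slices_snoc hg hD hfh _
  have hM := M.card_le_card_add_finrank_ker_mulVecLin
  have hsplit := card_filter_add_card_filter_not (s := S) (slot · = Fin.last _)
  rw [Fintype.card_coe] at hM hS'
  rw [card_subtype] at hS'
  simp only [ne_eq] at hS'
  omega

end SliceRank

section PolynomialMethod

open MvPolynomial

def lowExponents (μ : Type*) [Fintype μ] [DecidableEq μ] (d k : ℕ) : Finset (μ → ℕ) :=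
  {a ∈ Fintype.piFinset fun _ => range (d + 1) | k * ∑ m, a m ≤ d * Fintype.card μ}

lemma MvPolynomial.sum_le_totalDegree {R σ : Type*} [CommSemiring R] [Fintype σ]
    {P : MvPolynomial σ R} {s : σ →₀ ℕ} (hs : s ∈ P.support) : ∑ i, s i ≤ P.totalDegree := by
  simpa [Finsupp.sum_fintype] using le_totalDegree hs

theorem exists_slices_of_totalDegree_le {R : Type*} [CommRing R] {k : ℕ} [NeZero k]
    {ι μ : Type*} [Fintype μ] [DecidableEq μ] {d : ℕ} {P : MvPolynomial (Fin k) R}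
    (hP : P.totalDegree ≤ d) (y : Fin k → ι → μ → R) :
    ∃ (S : Finset (Fin k × (μ → ℕ))) (g : Fin k × (μ → ℕ) → (Fin k → ι) → R),
      S ⊆ univ ×ˢ lowExponents μ d k ∧ (∀ s ∈ S, DependsOn (g s) {s.1}ᶜ) ∧
      ∀ i, ∏ m, eval (fun j => y j (i j) m) P =
        ∑ s ∈ S, (∏ m, y s.1 (i s.1) m ^ s.2 m) * g s i := by
  -- Expand the product into monomials `E`; each has a block of variables `(j, ·)` of degree at
  -- most `d |μ| / k`, and the monomial is a slice in the coordinate `j`.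
  set 𝓔 := Fintype.piFinset fun _ : μ => P.support
  have hdeg : ∀ E ∈ 𝓔, ∀ m, ∑ j, E m j ≤ d := fun E hE m =>
    (sum_le_totalDegree (Fintype.mem_piFinset.1 hE m)).trans hP
  have hpiv : ∀ E ∈ 𝓔, ∃ j, k * ∑ m, E m j ≤ d * Fintype.card μ := by
    intro E hE
    have : ∑ j, k * ∑ m, E m j ≤ ∑ _j : Fin k, d * Fintype.card μ := by
      rw [← mul_sum, sum_comm, sum_const, card_univ, Fintype.card_fin, smul_eq_mul]
      gcongr
      calc ∑ m, ∑ j, E m j ≤ ∑ _m : μ, d := sum_le_sum fun m _ => hdeg E hE m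
        _ = d * Fintype.card μ := by simp [mul_comm]
    obtain ⟨j, -, hj⟩ := exists_le_of_sum_le univ_nonempty this
    exact ⟨j, hj⟩
  choose! piv hpiv using hpiv
  let κ : (μ → Fin k →₀ ℕ) → Fin k × (μ → ℕ) := fun E => (piv E, fun m => E m (piv E))
  refine ⟨𝓔.image κ, fun s i => ∑ E ∈ 𝓔 with κ E = s,
    (∏ m, coeff (E m) P) * ∏ j ∈ univ.erase s.1, ∏ m, y j (i j) m ^ E m j, ?_, ?_, fun i => ?_⟩
  · intro s hs
    obtain ⟨E, hE, rfl⟩ := mem_image.1 hs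
    simp only [lowExponents, mem_product, mem_univ, true_and, mem_filter, Fintype.mem_piFinset,
      mem_range, κ]
    exact ⟨fun m => Nat.lt_succ_of_le
      ((single_le_sum (fun j _ => Nat.zero_le _) (mem_univ _)).trans (hdeg E hE m)), hpiv E hE⟩
  · intro s _ i i' hii
    refine sum_congr rfl fun E _ => congrArg _ (prod_congr rfl fun j hj => ?_)
    rw [hii j (ne_of_mem_erase hj)]
  · calc ∏ m, eval (fun j => y j (i j) m) P
        = ∑ E ∈ 𝓔, (∏ m, coeff (E m) P) * ∏ j, ∏ m, y j (i j) m ^ E m j := by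
          simp_rw [eval_eq', prod_univ_sum, prod_mul_distrib]
          rw [sum_congr rfl fun E _ => by rw [prod_comm]]
      _ = ∑ E ∈ 𝓔, (∏ m, y (κ E).1 (i (κ E).1) m ^ (κ E).2 m) * ((∏ m, coeff (E m) P) *
            ∏ j ∈ univ.erase (κ E).1, ∏ m, y j (i j) m ^ E m j) := by
          refine sum_congr rfl fun E _ => ?_
          rw [← mul_prod_erase univ _ (mem_univ (piv E))]
          ring
      _ = _ := by
          rw [← sum_fiberwise_of_maps_to fun E hE => mem_image_of_mem κ hE]
          refine sum_congr rfl fun s _ => ?_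
          rw [mul_sum]
          exact sum_congr rfl fun E hE => by rw [(mem_filter.1 hE).2]

def IsColoredSumFree {G ι : Type*} [AddCommMonoid G] {k : ℕ} (x : Fin k → ι → G) : Prop :=
  ∀ i : Fin k → ι, ∑ j, x j (i j) = 0 ↔ ∀ j j', i j = i j'

theorem IsColoredSumFree.pow {G ι μ : Type*} [AddCommMonoid G] {k : ℕ} {x : Fin k → ι → μ → G}
    (hx : IsColoredSumFree x) (r : ℕ) :
    IsColoredSumFree fun j (I : Fin r → ι) (q : Fin r × μ) => x j (I q.1) q.2 := by
  intro I
  calc ∑ j, (fun q : Fin r × μ => x j (I j q.1) q.2) = 0 ↔ ∀ b, ∑ j, x j (I j b) = 0 := by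
        simp [funext_iff, Finset.sum_apply, Prod.forall]
    _ ↔ ∀ b j j', I j b = I j' b := forall_congr' fun b => hx fun j => I j b
    _ ↔ ∀ j j', I j = I j' := by simp only [funext_iff]; tauto

lemma ZMod.one_sub_pow_sub_one {p : ℕ} [Fact p.Prime] (a : ZMod p) :
    1 - a ^ (p - 1) = if a = 0 then 1 else 0 := by
  split_ifs with ha
  · rw [ha, zero_pow (Nat.sub_ne_zero_of_lt (Fact.out : p.Prime).one_lt), sub_zero]
  · rw [ZMod.pow_card_sub_one_eq_one ha, sub_self]

theorem card_le_mul_card_lowExponents {p k : ℕ} [Fact p.Prime] (hk : 2 ≤ k) {ι μ : Type*}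
    [Fintype ι] [DecidableEq ι] [Fintype μ] [DecidableEq μ] {x : Fin k → ι → μ → ZMod p}
    (hx : IsColoredSumFree x) : Fintype.card ι ≤ k * #(lowExponents μ (p - 1) k) := by
  obtain ⟨m, rfl⟩ : ∃ m, k = m + 2 := ⟨k - 2, by omega⟩
  set P : MvPolynomial (Fin (m + 2)) (ZMod p) := 1 - (∑ j, X j) ^ (p - 1)
  have hP : P.totalDegree ≤ p - 1 := by
    refine (totalDegree_sub _ _).trans (max_le (by simp) ((totalDegree_pow _ _).trans ?_))
    have : (∑ j, X j : MvPolynomial (Fin (m + 2)) (ZMod p)).totalDegree ≤ 1 :=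
      totalDegree_finsetSum_le fun j _ => (totalDegree_X j).le
    simpa using Nat.mul_le_mul_left (p - 1) this
  have hdiag : ∀ i, diagTensor 1 i = ∏ q, eval (fun j => x j (i j) q) P := by
    intro i
    simp only [P, map_sub, map_one, map_pow, map_sum, eval_X, ZMod.one_sub_pow_sub_one]
    have hconst : (∀ j, i j = i 0) ↔ ∀ q, ∑ j, x j (i j) q = 0 := by
      have : (∀ q, ∑ j, x j (i j) q = 0) ↔ ∑ j, x j (i j) = 0 := by
        simp [funext_iff, Finset.sum_apply]
      rw [this, hx i]
      exact ⟨fun h j j' => (h j).trans (h j').symm, fun h j => h j 0⟩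
    rw [Fintype.prod_boole]
    exact if_congr hconst rfl rfl
  obtain ⟨S, g, hS, hg, hPS⟩ := exists_slices_of_totalDegree_le hP x
  calc Fintype.card ι ≤ #S :=
        card_le_of_diagTensor_eq_sum_slices (f := fun s ℓ => ∏ q, x s.1 ℓ q ^ s.2 q)
          (fun _ => one_ne_zero) hg fun i => (hdiag i).trans (hPS i)
    _ ≤ #(univ ×ˢ lowExponents μ (p - 1) (m + 2)) := card_le_card hS
    _ = (m + 2) * #(lowExponents μ (p - 1) (m + 2)) := by simp

end PolynomialMethod

theorem card_lowExponents_le {μ : Type*} [Fintype μ] [DecidableEq μ] {d k : ℕ} (hk : 0 < k)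
    {t : ℝ} (ht0 : 0 < t) (ht1 : t ≤ 1) :
    (#(lowExponents μ d k) : ℝ) ≤
      ((∑ i ∈ range (d + 1), t ^ i) / t ^ ((d : ℝ) / k)) ^ Fintype.card μ := by
  -- Markov's inequality for the weight `t ^ ∑ a`, which is at least `t ^ (d |μ| / k)` on
  -- `lowExponents μ d k`
  set n := Fintype.card μ
  have hweight : ∀ a ∈ lowExponents μ d k, (t ^ ((d : ℝ) / k)) ^ n ≤ ∏ m, t ^ a m := by
    intro a ha
    have hsum : k * ∑ m, a m ≤ d * n := (mem_filter.1 ha).2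
    rw [prod_pow_eq_pow_sum, ← Real.rpow_natCast, ← Real.rpow_natCast, ← Real.rpow_mul ht0.le]
    refine Real.rpow_le_rpow_of_exponent_ge ht0 ht1 ?_
    rw [div_mul_eq_mul_div, le_div_iff₀ (by exact_mod_cast hk), mul_comm]
    exact_mod_cast hsum
  rw [div_pow, le_div_iff₀ (by positivity)]
  calc (#(lowExponents μ d k) : ℝ) * (t ^ ((d : ℝ) / k)) ^ n
      ≤ ∑ a ∈ lowExponents μ d k, ∏ m, t ^ a m := by
        rw [← nsmul_eq_mul]
        exact card_nsmul_le_sum _ _ _ hweight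
    _ ≤ ∑ a ∈ Fintype.piFinset fun _ : μ => range (d + 1), ∏ m, t ^ a m :=
        sum_le_sum_of_subset_of_nonneg (filter_subset _ _) fun _ _ _ => by positivity
    _ = (∑ i ∈ range (d + 1), t ^ i) ^ n := by rw [sum_prod_piFinset, prod_const, card_univ]

lemma le_csInf_pow {s : Set ℝ} (hs : s.Nonempty) (hs0 : ∀ y ∈ s, 0 ≤ y) {M : ℝ} (hM : 0 ≤ M)
    {n : ℕ} (h : ∀ y ∈ s, M ≤ y ^ n) : M ≤ sInf s ^ n := by
  rcases Nat.eq_zero_or_pos n with rfl | hn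
  · obtain ⟨y, hy⟩ := hs
    simpa using h y hy
  have hroot : M ^ (n⁻¹ : ℝ) ≤ sInf s := le_csInf hs fun y hy => by
    calc M ^ (n⁻¹ : ℝ) ≤ (y ^ n) ^ (n⁻¹ : ℝ) := Real.rpow_le_rpow hM (h y hy) (by positivity)
      _ = y := Real.pow_rpow_inv_natCast (hs0 y hy) hn.ne'
  calc M = (M ^ (n⁻¹ : ℝ)) ^ n := (Real.rpow_inv_natCast_pow hM hn.ne').symm
    _ ≤ sInf s ^ n := pow_le_pow_left₀ (by positivity) hroot n

lemma nonneg_of_mem_image_gammaPK {p k : ℕ} {y : ℝ}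
    (hy : y ∈ (fun t : ℝ => (∑ i ∈ range p, t ^ i) / t ^ (((p : ℝ) - 1) / k)) '' Set.Ioo 0 1) :
    0 ≤ y := by
  obtain ⟨t, ⟨ht0, -⟩, rfl⟩ := hy
  exact div_nonneg (sum_nonneg fun i _ => pow_nonneg ht0.le i) (Real.rpow_nonneg ht0.le _)

lemma gammaPK_nonneg (p k : ℕ) : 0 ≤ GammaPK p k :=
  Real.sInf_nonneg fun _ => nonneg_of_mem_image_gammaPK

theorem card_lowExponents_le_gammaPK {p k : ℕ} (hp : 1 ≤ p) (hk : 0 < k) (μ : Type*)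
    [Fintype μ] [DecidableEq μ] :
    (#(lowExponents μ (p - 1) k) : ℝ) ≤ GammaPK p k ^ Fintype.card μ := by
  refine le_csInf_pow ⟨_, Set.mem_image_of_mem _ (by norm_num : (1 / 2 : ℝ) ∈ Set.Ioo 0 1)⟩
    (fun _ => nonneg_of_mem_image_gammaPK) (Nat.cast_nonneg _) ?_
  rintro - ⟨t, ⟨ht0, ht1⟩, rfl⟩
  have := card_lowExponents_le (μ := μ) (d := p - 1) hk ht0 ht1.le
  rwa [Nat.sub_add_cancel hp, Nat.cast_sub hp, Nat.cast_one] at this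

lemma le_of_forall_pow_le_mul_pow {a b C : ℝ} (hb : 0 ≤ b) (h : ∀ r : ℕ, a ^ r ≤ C * b ^ r) :
    a ≤ b := by
  by_contra! hab
  have ha : 0 < a := hb.trans_lt hab
  have hC : 0 < C := by linarith [show (1 : ℝ) ≤ C by simpa using h 0]
  obtain ⟨r, hr⟩ := exists_pow_lt_of_lt_one (inv_pos.2 hC) ((div_lt_one ha).2 hab)
  rw [div_pow, div_lt_iff₀ (pow_pos ha r)] at hr
  have : C * b ^ r < a ^ r := by
    calc C * b ^ r < C * (C⁻¹ * a ^ r) := mul_lt_mul_of_pos_left hr hC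
      _ = a ^ r := by field_simp
  linarith [h r]

theorem stmt4_general {k p n : ℕ} (hk : 3 ≤ k) (hp : p.Prime)
    (L : ℕ) (x : Fin k → Fin L → (Fin n → ZMod p))
    (h : ∀ i : Fin k → Fin L, ∑ j, x j (i j) = 0 ↔ ∀ j j', i j = i j') :
    (L : ℝ) ≤ GammaPK p k ^ n := by
  have := Fact.mk hp
  refine le_of_forall_pow_le_mul_pow (C := k) (pow_nonneg (gammaPK_nonneg p k) n) fun r => ?_
  have hcard := card_le_mul_card_lowExponents (by omega) ((show IsColoredSumFree x from h).pow r)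
  calc (L : ℝ) ^ r = Fintype.card (Fin r → Fin L) := by simp
    _ ≤ k * #(lowExponents (Fin r × Fin n) (p - 1) k) := by exact_mod_cast hcard
    _ ≤ k * GammaPK p k ^ Fintype.card (Fin r × Fin n) := by
        gcongr
        exact card_lowExponents_le_gammaPK hp.one_le (by omega) _
    _ = k * (GammaPK p k ^ n) ^ r := by
        rw [Fintype.card_prod, Fintype.card_fin, Fintype.card_fin, ← pow_mul, mul_comm r n]

/-- For `k ≥ 3`, a prime `p ≥ 3` and `n ≥ 1`, any `k`-colored sum-free set
`(x_{1,i}, …, x_{k,i})_{i=1}^L` in `𝔽_p^n` (i.e. a collection of `k`-tuples such that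
`x_{1,i₁} + ⋯ + x_{k,i_k} = 0` iff `i₁ = ⋯ = i_k`) has size `L ≤ Γ_{p,k}^n`. -/
theorem stmt4 {k p n : ℕ} (hk : 3 ≤ k) (hp : p.Prime) (hp3 : 3 ≤ p) (hn : 0 < n)
    (L : ℕ) (x : Fin k → Fin L → (Fin n → ZMod p))
    (h : ∀ i : Fin k → Fin L, ∑ j, x j (i j) = 0 ↔ ∀ j j', i j = i j') :
    (L : ℝ) ≤ GammaPK p k ^ n :=
  stmt4_general hk hp L x h
end

section
/- For every prime p ≥ 5, one has √(γ_p·p) < Γ_{p,3}. -/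
/-!
Pairing `t ^ i` with `t ^ (m - 1 - i)` (AM–GM) gives `∑_{i<p} t^i ≥ m t^{(m-1)/2} ≥ m t^{(p-1)/3}`
for `m = ⌊2(p-1)/3⌋ + 1`, so `Γ_{p,3} ≥ m ≈ 2p/3`, while `t = 1/2` shows `γ_p < 4`.
Hence `γ_p p < 4p ≤ m²` once `p ≥ 10`. For the remaining primes `5` and `7`, the substitution
`t = u ^ k` turns both infima into explicit polynomial inequalities.
-/

/-- `γ_p = inf_{0<t<1} (1 + t + ⋯ + t^{p-1}) / t^{(p-1)/p}`. -/
noncomputable def gammaP (p : ℕ) : ℝ :=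
  sInf ((fun t : ℝ => (∑ i ∈ Finset.range p, t ^ i) / t ^ (((p : ℝ) - 1) / p)) '' Set.Ioo 0 1)

open Finset Real

section GammaPK

variable {p k : ℕ}

lemma GammaPK_le {t : ℝ} (ht : t ∈ Set.Ioo 0 1) :
    GammaPK p k ≤ (∑ i ∈ range p, t ^ i) / t ^ (((p : ℝ) - 1) / k) := by
  refine csInf_le ⟨0, ?_⟩ ⟨t, ht, rfl⟩
  rintro _ ⟨s, hs, rfl⟩
  have := hs.1
  positivity

lemma le_GammaPK {B : ℝ}
    (h : ∀ t ∈ Set.Ioo (0 : ℝ) 1, B * t ^ (((p : ℝ) - 1) / k) ≤ ∑ i ∈ range p, t ^ i) :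
    B ≤ GammaPK p k := by
  refine le_csInf ((Set.nonempty_Ioo.2 one_pos).image _) ?_
  rintro _ ⟨t, ht, rfl⟩
  rw [le_div_iff₀ (rpow_pos_of_pos ht.1 _)]
  exact h t ht

lemma pow_rpow_sub_one_div_natCast {u : ℝ} (hu : 0 ≤ u) (hp : 1 ≤ p) (hk : k ≠ 0) :
    (u ^ k) ^ (((p : ℝ) - 1) / k) = u ^ (p - 1) := by
  rw [← rpow_natCast_mul hu, mul_div_cancel₀ _ (Nat.cast_ne_zero.2 hk), ← rpow_natCast,
    Nat.cast_sub hp, Nat.cast_one]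

lemma GammaPK_le_of_pow (hp : 1 ≤ p) (hk : k ≠ 0) {u : ℝ} (hu : u ∈ Set.Ioo 0 1) :
    GammaPK p k ≤ (∑ i ∈ range p, (u ^ k) ^ i) / u ^ (p - 1) := by
  rw [← pow_rpow_sub_one_div_natCast hu.1.le hp hk]
  exact GammaPK_le ⟨pow_pos hu.1 k, pow_lt_one₀ hu.1.le hu.2 hk⟩

lemma le_GammaPK_of_pow (hp : 1 ≤ p) (hk : k ≠ 0) {B : ℝ}
    (h : ∀ u ∈ Set.Ioo (0 : ℝ) 1, B * u ^ (p - 1) ≤ ∑ i ∈ range p, (u ^ k) ^ i) :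
    B ≤ GammaPK p k := by
  refine le_GammaPK fun t ht => ?_
  obtain ⟨u, hu, rfl⟩ : ∃ u ∈ Set.Ioo (0 : ℝ) 1, u ^ k = t :=
    ⟨t ^ (k⁻¹ : ℝ), ⟨rpow_pos_of_pos ht.1 _, rpow_lt_one ht.1.le ht.2 (by positivity)⟩,
      rpow_inv_natCast_pow ht.1.le hk⟩
  rw [pow_rpow_sub_one_div_natCast hu.1.le hp hk]
  exact h u hu

end GammaPK

lemma mul_pow_le_sum_range_sq_pow (s : ℝ) (m : ℕ) :
    m * s ^ (m - 1) ≤ ∑ i ∈ range m, (s ^ 2) ^ i := by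
  have pair : ∀ i ∈ range m, 2 * s ^ (m - 1) ≤ (s ^ 2) ^ i + (s ^ 2) ^ (m - 1 - i) := by
    intro i hi
    have hsplit : s ^ (m - 1) = s ^ i * s ^ (m - 1 - i) := by
      rw [← pow_add]
      congr 1
      have := mem_range.1 hi
      omega
    rw [hsplit, pow_right_comm s 2 i, pow_right_comm s 2 (m - 1 - i)]
    nlinarith [sq_nonneg (s ^ i - s ^ (m - 1 - i))]
  have hsum := sum_le_sum pair
  rw [sum_add_distrib, sum_range_reflect (fun i => (s ^ 2) ^ i) m, sum_const, card_range,
    nsmul_eq_mul] at hsum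
  linarith

lemma natCast_mul_rpow_le_sum_range_pow {t : ℝ} (ht : 0 ≤ t) (m : ℕ) :
    m * t ^ (((m : ℝ) - 1) / 2) ≤ ∑ i ∈ range m, t ^ i := by
  rcases Nat.eq_zero_or_pos m with rfl | hm
  · simp
  have hsqrt : t ^ (((m : ℝ) - 1) / 2) = √t ^ (m - 1) := by
    rw [sqrt_eq_rpow, ← rpow_mul_natCast ht, Nat.cast_sub hm, Nat.cast_one]
    ring_nf
  simpa only [hsqrt, sq_sqrt ht] using mul_pow_le_sum_range_sq_pow (√t) m

lemma natCast_le_GammaPK {p k : ℕ} (hp : 1 ≤ p) (hk : 2 ≤ k) :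
    ((2 * (p - 1) / k + 1 : ℕ) : ℝ) ≤ GammaPK p k := by
  set m := 2 * (p - 1) / k + 1
  have hmp : m ≤ p := by
    have : 2 * (p - 1) / k ≤ p - 1 :=
      Nat.div_le_of_le_mul (Nat.mul_le_mul_right _ hk)
    omega
  have hexp : ((m : ℝ) - 1) / 2 ≤ ((p : ℝ) - 1) / k := by
    have hdiv : ((2 * (p - 1) / k : ℕ) : ℝ) * k ≤ 2 * ((p : ℝ) - 1) := by
      have := (Nat.cast_le (α := ℝ)).2 (Nat.div_mul_le_self (2 * (p - 1)) k)
      push_cast [Nat.cast_sub hp] at this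
      exact this
    rw [div_le_div_iff₀ two_pos (by positivity)]
    simp only [m, Nat.cast_add, Nat.cast_one, add_sub_cancel_right]
    linarith
  refine le_GammaPK fun t ht => ?_
  calc (m : ℝ) * t ^ (((p : ℝ) - 1) / k)
      ≤ m * t ^ (((m : ℝ) - 1) / 2) :=
        mul_le_mul_of_nonneg_left (rpow_le_rpow_of_exponent_ge ht.1 ht.2.le hexp)
          (Nat.cast_nonneg m)
    _ ≤ ∑ i ∈ range m, t ^ i := natCast_mul_rpow_le_sum_range_pow ht.1.le m
    _ ≤ ∑ i ∈ range p, t ^ i :=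
        sum_le_sum_of_subset_of_nonneg (range_subset_range.2 hmp) fun i _ _ => by
          have := ht.1
          positivity

lemma gammaP_lt_four (p : ℕ) : gammaP p < 4 := by
  have hsum : ∑ i ∈ range p, (1 / 2 : ℝ) ^ i < 2 := by
    rw [geom_sum_eq (by norm_num), div_lt_iff_of_neg (by norm_num)]
    linarith [pow_pos (by norm_num : (0 : ℝ) < 1 / 2) p]
  have hden : (1 / 2 : ℝ) ≤ (1 / 2) ^ (((p : ℝ) - 1) / p) := by
    refine le_of_eq_of_le (rpow_one _).symm (rpow_le_rpow_of_exponent_ge (by norm_num)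
      (by norm_num) (div_le_one_of_le₀ (by linarith) (Nat.cast_nonneg p)))
  calc gammaP p ≤ (∑ i ∈ range p, (1 / 2 : ℝ) ^ i) / (1 / 2) ^ (((p : ℝ) - 1) / p) :=
        GammaPK_le ⟨by norm_num, by norm_num⟩
    _ ≤ (∑ i ∈ range p, (1 / 2 : ℝ) ^ i) / (1 / 2) := by gcongr
    _ < 4 := by linarith

lemma sqrt_gammaP_mul_lt_GammaPK_three {p : ℕ} (hp : 10 ≤ p) :
    √(gammaP p * p) < GammaPK p 3 := by
  set m := 2 * (p - 1) / 3 + 1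
  have hm : 2 * p ≤ 3 * m + 1 := by omega
  have hm' : 2 * (p : ℝ) ≤ 3 * m + 1 := by exact_mod_cast hm
  have hp' : (10 : ℝ) ≤ p := by exact_mod_cast hp
  calc √(gammaP p * p) < m := by
        rw [sqrt_lt' (by positivity)]
        nlinarith [gammaP_lt_four p]
    _ ≤ GammaPK p 3 := natCast_le_GammaPK (by omega) (by norm_num)

lemma sqrt_gammaP_five_mul_lt : √(gammaP 5 * 5) < GammaPK 5 3 := by
  have hγ : gammaP 5 ≤ (∑ i ∈ range 5, ((9 / 10 : ℝ) ^ 5) ^ i) / (9 / 10) ^ 4 :=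
    GammaPK_le_of_pow (by norm_num) (by norm_num) ⟨by norm_num, by norm_num⟩
  have hΓ : 21 / 5 ≤ GammaPK 5 3 := by
    refine le_GammaPK_of_pow (by norm_num) (by norm_num) fun u hu => ?_
    simp only [sum_range_succ, sum_range_zero]
    nlinarith [sq_nonneg (u ^ 2 - 4 / 5), sq_nonneg (u ^ 3 - 4 / 5 * u),
      mul_nonneg hu.1.le (sq_nonneg (u ^ 2 - 4 / 5 * u))]
  calc √(gammaP 5 * 5) < 21 / 5 := by
        rw [sqrt_lt' (by norm_num)]
        norm_num [sum_range_succ] at hγ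
        linarith
    _ ≤ GammaPK 5 3 := hΓ

lemma sqrt_gammaP_seven_mul_lt : √(gammaP 7 * 7) < GammaPK 7 3 := by
  have hΓ : 11 / 2 ≤ GammaPK 7 3 := by
    refine le_GammaPK_of_pow (by norm_num) (by norm_num) fun u hu => ?_
    have ht := pow_pos hu.1 3
    rw [show u ^ (7 - 1) = (u ^ 3) ^ 2 by ring]
    generalize u ^ 3 = t at ht ⊢
    simp only [sum_range_succ, sum_range_zero, zero_add, pow_zero, pow_one]
    nlinarith [sq_nonneg (t ^ 2 + t / 2 - 1), mul_nonneg ht.le (sq_nonneg (t ^ 2 + t - 1)),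
      sq_nonneg (t ^ 3 + t ^ 2 / 2 - t), pow_pos ht 3, pow_pos ht 5]
  calc √(gammaP 7 * 7) < 11 / 2 := by
        rw [sqrt_lt' (by norm_num)]
        linarith [gammaP_lt_four 7]
    _ ≤ GammaPK 7 3 := hΓ

/-- For every prime `p ≥ 5`, one has `√(γ_p·p) < Γ_{p,3}`. -/
theorem stmt6 {p : ℕ} (hp : p.Prime) (hp5 : 5 ≤ p) :
    Real.sqrt (gammaP p * p) < GammaPK p 3 := by
  obtain rfl | rfl | hp10 : p = 5 ∨ p = 7 ∨ 10 ≤ p := by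
    by_contra! h
    obtain ⟨h5, h7, h10⟩ := h
    interval_cases p <;> norm_num at *
  · exact_mod_cast sqrt_gammaP_five_mul_lt
  · exact_mod_cast sqrt_gammaP_seven_mul_lt
  · exact sqrt_gammaP_mul_lt_GammaPK_three hp10
end

section
/- Let p ≥ 5 be a prime and n a positive integer, and let X_1, …, X_p ⊆ 𝔽_p^n be such that every cycle (x_1, …, x_p) ∈ X_1 × ⋯ × X_p satisfies x_1 = x_2. Then for every j ∈ {3, …, p}, the number of j-extendable pairs (y, z) ∈ X_1 × X_j is at most p^n. -/
/-!
Sending a pair `(y, z)` to `y + z` is injective on the `j`-extendable pairs, so there are at most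
`|𝔽_p^n| = p^n` of them. Indeed, if `(y, z)` and `(y', z')` are extendable with `y + z = y' + z'`,
replacing `x_1, x_j` by `y', z'` in a cycle through `(y, z)` gives another cycle in
`X_1 × ⋯ × X_p`. Both cycles share their second coordinate, so the hypothesis forces `y' = x_2 = y`.
-/

open Function Set

lemma Fintype.sum_update_eq_sub_add {ι G : Type*} [Fintype ι] [DecidableEq ι] [AddCommGroup G]
    (x : ι → G) (a : ι) (u : G) : ∑ i, update x a u i = ∑ i, x i - x a + u := by
  rw [Finset.sum_update_of_mem (Finset.mem_univ a),
    Finset.sdiff_singleton_eq_erase, ← Finset.add_sum_erase _ x (Finset.mem_univ a)]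
  abel

section ExtendablePairs

variable {ι G : Type*} [Fintype ι] [AddCommGroup G]

def extendablePairs (X : ι → Set G) (a c : ι) : Set (G × G) :=
  {q | ∃ x : ι → G, (∀ i, x i ∈ X i) ∧ ∑ i, x i = 0 ∧ x a = q.1 ∧ x c = q.2}

variable {X : ι → Set G} {a b c : ι}

theorem injOn_add_extendablePairs
    (hX : ∀ x : ι → G, (∀ i, x i ∈ X i) → ∑ i, x i = 0 → x a = x b)
    (hab : a ≠ b) (hac : a ≠ c) (hbc : b ≠ c) :
    InjOn (fun q : G × G => q.1 + q.2) (extendablePairs X a c) := by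
  classical
  rintro ⟨y, z⟩ ⟨x, hxX, hx, rfl, rfl⟩ ⟨y', z'⟩ ⟨x', hx'X, -, rfl, rfl⟩ hsum
  simp only at hsum
  set w := update (update x a (x' a)) c (x' c)
  have hwX : ∀ i, w i ∈ X i := by
    refine forall_update_iff _ (fun i v => v ∈ X i) |>.2 ⟨hx'X c, fun i _ => ?_⟩
    exact forall_update_iff _ (fun i v => v ∈ X i) |>.2 ⟨hx'X a, fun i _ => hxX i⟩ i
  have hw : ∑ i, w i = 0 := by
    simp only [w, Fintype.sum_update_eq_sub_add, update_of_ne hac.symm, hx]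
    exact (by abel : _ = x' a + x' c - (x a + x c)).trans (sub_eq_zero_of_eq hsum.symm)
  have hwa : w a = x' a := by simp [w, update_of_ne hac]
  have hwb : w b = x b := by simp [w, update_of_ne hbc, update_of_ne hab.symm]
  have hxa : x' a = x a := by rw [← hwa, hX w hwX hw, hwb, hX x hxX hx]
  rw [hxa] at hsum ⊢
  rw [add_left_cancel hsum]

theorem ncard_extendablePairs_le [Finite G]
    (hX : ∀ x : ι → G, (∀ i, x i ∈ X i) → ∑ i, x i = 0 → x a = x b)
    (hab : a ≠ b) (hac : a ≠ c) (hbc : b ≠ c) :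
    (extendablePairs X a c).ncard ≤ Nat.card G := by
  rw [← (injOn_add_extendablePairs hX hab hac hbc).ncard_image]
  exact ncard_le_card _

end ExtendablePairs

/-- Suppose `X_1, …, X_p ⊆ 𝔽_p^n` are such that every cycle (p-tuple summing to zero)
`(x_1, …, x_p) ∈ X_1 × ⋯ × X_p` satisfies `x_1 = x_2`. Then for every `j ∈ {3, …, p}`,
the number of `j`-extendable pairs `(y,z) ∈ X_1 × X_j` (pairs for which there is a cycle
`(x_1, …, x_p) ∈ X_1 × ⋯ × X_p` with `x_1 = y` and `x_j = z`) is at most `p^n`. -/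
theorem stmt8 {p n : ℕ} (hp5 : 5 ≤ p)
    (X : Fin p → Set (Fin n → ZMod p))
    (hX : ∀ x : Fin p → (Fin n → ZMod p), (∀ i, x i ∈ X i) → ∑ i, x i = 0 →
      x ⟨0, by omega⟩ = x ⟨1, by omega⟩)
    (j : Fin p) (hj : 2 ≤ (j : ℕ)) :
    {q : (Fin n → ZMod p) × (Fin n → ZMod p) |
      q.1 ∈ X ⟨0, by omega⟩ ∧ q.2 ∈ X j ∧
      ∃ x : Fin p → (Fin n → ZMod p), (∀ i, x i ∈ X i) ∧ ∑ i, x i = 0 ∧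
        x ⟨0, by omega⟩ = q.1 ∧ x j = q.2}.ncard ≤ p ^ n := by
  have : NeZero p := ⟨by omega⟩
  calc _ ≤ (extendablePairs X ⟨0, by omega⟩ j).ncard :=
        ncard_le_ncard (fun q hq => hq.2.2) (toFinite _)
    _ ≤ Nat.card (Fin n → ZMod p) :=
        ncard_extendablePairs_le hX (by simp [Fin.ext_iff])
          (by simp [Fin.ext_iff]; omega) (by simp [Fin.ext_iff]; omega)
    _ = p ^ n := by simp
end

section
/- Let p ≥ 5 be a prime, n a positive integer, and A ⊆ 𝔽_p^n a nonempty set. Let L = ⌈|A|/(p·P(p))⌉. Then there exist a subset A' ⊆ A and a multiplicity pattern λ = (λ_1, …, λ_k) (a partition of p of length k) such that: (i) there is a collection of L pairwise disjoint cycles (x_1, …, x_p) ∈ A' × ⋯ × A' with multiplicity pattern λ; and (ii) every cycle (x_1, …, x_p) ∈ A' × ⋯ × A' has multiplicity pattern of length at most k. -/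
/-!
Greedily remove from `A` a zero-sum `p`-tuple whose multiplicity pattern is as long as possible
(constant tuples guarantee one exists while anything is left) and discard its at most `p`
entries. This produces at least `|A| / p` pairwise disjoint cycles, so by pigeonhole at least
`L` of them share a pattern `λ`. For `A'` take the set that was left when the first of these
was chosen: all later cycles lie in it, and by the greedy choice no cycle in it has a longer
pattern than `λ`.
-/

/-- The multiset of entries of a `p`-tuple of elements of `𝔽_p^n`. -/
def entriesMultiset {p n : ℕ} (x : Fin p → (Fin n → ZMod p)) : Multiset (Fin n → ZMod p) :=
  Multiset.map x Finset.univ.val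

/-- The multiplicity pattern of a `p`-tuple `(x_1, …, x_p)`: the multiset recording, for each
of the distinct elements of `𝔽_p^n` occurring among `x_1, …, x_p`, the multiplicity with
which it occurs. Its cardinality is the number of distinct elements among `x_1, …, x_p`,
i.e. the length of the multiplicity pattern. -/
def multPattern {p n : ℕ} (x : Fin p → (Fin n → ZMod p)) : Multiset ℕ :=
  (entriesMultiset x).toFinset.val.map fun g => (entriesMultiset x).count g

section ZeroSumTuples

variable {G : Type*} [AddCommMonoid G] [DecidableEq G]

def zeroSumTuples (p : ℕ) (S : Finset G) : Finset (Fin p → G) :=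
  (Fintype.piFinset fun _ => S).filter fun x => ∑ i, x i = 0

variable {p : ℕ}

theorem mem_zeroSumTuples {S : Finset G} {x : Fin p → G} :
    x ∈ zeroSumTuples p S ↔ (∀ i, x i ∈ S) ∧ ∑ i, x i = 0 := by
  simp [zeroSumTuples]

theorem zeroSumTuples_mono {S T : Finset G} (h : S ⊆ T) :
    zeroSumTuples p S ⊆ zeroSumTuples p T := fun x hx => by
  rw [mem_zeroSumTuples] at hx ⊢
  exact ⟨fun i => h (hx.1 i), hx.2⟩

theorem zeroSumTuples_empty (hp : p ≠ 0) : zeroSumTuples p (∅ : Finset G) = ∅ := by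
  ext x
  simp only [mem_zeroSumTuples, Finset.notMem_empty, iff_false, not_and]
  exact fun h _ => h ⟨0, Nat.pos_of_ne_zero hp⟩

theorem zeroSumTuples_nonempty (hG : ∀ a : G, p • a = 0) {S : Finset G} (hS : S.Nonempty) :
    (zeroSumTuples p S).Nonempty := by
  obtain ⟨a, ha⟩ := hS
  exact ⟨fun _ => a, mem_zeroSumTuples.2 ⟨fun _ => ha, by simp [hG]⟩⟩

theorem ne_of_mem_zeroSumTuples_sdiff {S T : Finset G} {x y : Fin p → G}
    (hT : T ⊆ S \ Finset.univ.image x) (hy : y ∈ zeroSumTuples p T) (i j : Fin p) :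
    x i ≠ y j := fun h =>
  (Finset.mem_sdiff.1 (hT ((mem_zeroSumTuples.1 hy).1 j))).2
    (h ▸ Finset.mem_image_of_mem x (Finset.mem_univ i))

end ZeroSumTuples

section MaxPatternPacking

variable {G β : Type*} [AddCommMonoid G] [DecidableEq G] {p : ℕ}
  (pat : (Fin p → G) → β) (len : β → ℕ)

def IsMaxPatternPacking (b : β) (T : Finset G) (F : Finset (Fin p → G)) : Prop :=
  (∀ x ∈ F, x ∈ zeroSumTuples p T ∧ pat x = b) ∧
    (F : Set (Fin p → G)).Pairwise (fun x y => ∀ i j, x i ≠ y j) ∧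
    ∀ y ∈ zeroSumTuples p T, len (pat y) ≤ len b

variable {pat len}

theorem isMaxPatternPacking_empty (hp : p ≠ 0) (b : β) :
    IsMaxPatternPacking pat len b ∅ ∅ := by
  simp [IsMaxPatternPacking, zeroSumTuples_empty hp]

theorem IsMaxPatternPacking.insert {S T : Finset G} {F : Finset (Fin p → G)} {x : Fin p → G}
    (hF : IsMaxPatternPacking pat len (pat x) T F) (hT : T ⊆ S \ Finset.univ.image x)
    (hx : x ∈ zeroSumTuples p S)
    (hmax : ∀ y ∈ zeroSumTuples p S, len (pat y) ≤ len (pat x)) :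
    IsMaxPatternPacking pat len (pat x) S (insert x F) := by
  obtain ⟨hmem, hdisj, -⟩ := hF
  have hxy : ∀ y ∈ F, ∀ i j, x i ≠ y j := fun y hy =>
    ne_of_mem_zeroSumTuples_sdiff hT (hmem y hy).1
  refine ⟨?_, ?_, hmax⟩
  · intro y hy
    rcases Finset.mem_insert.1 hy with rfl | hy
    · exact ⟨hx, rfl⟩
    · exact ⟨zeroSumTuples_mono (hT.trans Finset.sdiff_subset) (hmem y hy).1, (hmem y hy).2⟩
  · rw [Finset.coe_insert]
    exact hdisj.insert fun y hy _ => ⟨hxy y hy, fun i j => (hxy y hy j i).symm⟩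

theorem notMem_of_isMaxPatternPacking (hp : p ≠ 0) {b : β} {S T : Finset G}
    {F : Finset (Fin p → G)} {x : Fin p → G} (hF : IsMaxPatternPacking pat len b T F)
    (hT : T ⊆ S \ Finset.univ.image x) : x ∉ F := fun hx =>
  have i : Fin p := ⟨0, Nat.pos_of_ne_zero hp⟩
  ne_of_mem_zeroSumTuples_sdiff hT (hF.1 x hx).1 i i rfl

theorem exists_isMaxPatternPacking [Fintype β] [DecidableEq β] (hp : p ≠ 0)
    (hG : ∀ a : G, p • a = 0) (S : Finset G) :
    ∃ (T : β → Finset G) (F : β → Finset (Fin p → G)),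
      (∀ b, T b ⊆ S ∧ IsMaxPatternPacking pat len b (T b) (F b)) ∧
        S.card ≤ p * ∑ b, (F b).card := by
  induction S using Finset.strongInduction with
  | H S ih =>
  rcases S.eq_empty_or_nonempty with rfl | hS
  · exact ⟨fun _ => ∅, fun _ => ∅,
      fun b => ⟨subset_rfl, isMaxPatternPacking_empty hp b⟩, by simp⟩
  obtain ⟨x, hx, hmax⟩ :=
    (zeroSumTuples p S).exists_max_image (fun y => len (pat y)) (zeroSumTuples_nonempty hG hS)
  have hxS : Finset.univ.image x ⊆ S := by
    simpa [Finset.image_subset_iff] using (mem_zeroSumTuples.1 hx).1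
  have hx_ne : (Finset.univ.image x).Nonempty :=
    Finset.univ_nonempty_iff.2 ⟨⟨0, Nat.pos_of_ne_zero hp⟩⟩ |>.image x
  obtain ⟨T, F, hTF, hcard⟩ := ih _ (Finset.sdiff_ssubset hxS hx_ne)
  have hxF : x ∉ F (pat x) := notMem_of_isMaxPatternPacking hp (hTF _).2 (hTF _).1
  refine ⟨fun b => if b = pat x then S else T b,
    fun b => if b = pat x then insert x (F b) else F b, fun b => ?_, ?_⟩
  · dsimp only
    split_ifs with hb
    · subst hb
      exact ⟨subset_rfl, (hTF _).2.insert (hTF _).1 hx hmax⟩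
    · exact ⟨(hTF b).1.trans Finset.sdiff_subset, (hTF b).2⟩
  · have hcard_ite : ∀ b, (if b = pat x then insert x (F b) else F b).card =
        (F b).card + if b = pat x then 1 else 0 := fun b => by
      split_ifs with hb
      · subst hb; exact Finset.card_insert_of_notMem hxF
      · rfl
    have himage : (Finset.univ.image x).card ≤ p :=
      Finset.card_image_le.trans (Finset.card_fin p).le
    calc S.card ≤ (S \ Finset.univ.image x).card + (Finset.univ.image x).card :=
          Finset.card_le_card_sdiff_add_card
      _ ≤ p * ∑ b, (F b).card + p := by omega
      _ = p * ∑ b, (if b = pat x then insert x (F b) else F b).card := by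
        simp only [hcard_ite, Finset.sum_add_distrib, Finset.sum_ite_eq', Finset.mem_univ,
          if_true, mul_add, mul_one]

end MaxPatternPacking

theorem exists_ceil_div_le_of_le_mul_sum {β : Type*} [Fintype β] [Nonempty β] {m k : ℕ}
    {f : β → ℕ} (h : m ≤ k * ∑ b, f b) :
    ∃ b, ⌈(m : ℚ) / (k * Fintype.card β)⌉₊ ≤ f b := by
  suffices ∑ _b : β, (m : ℚ) / (k * Fintype.card β) ≤ ∑ b, (f b : ℚ) by
    obtain ⟨b, -, hb⟩ := Finset.exists_le_of_sum_le Finset.univ_nonempty this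
    exact ⟨b, Nat.ceil_le.2 hb⟩
  have hβ : (Fintype.card β : ℚ) ≠ 0 := by positivity
  calc ∑ _b : β, (m : ℚ) / (k * Fintype.card β) = m / k := by
        rw [Finset.sum_const, Finset.card_univ, nsmul_eq_mul]
        field_simp
    _ ≤ ∑ b, (f b : ℚ) :=
      div_le_of_le_mul₀ (Nat.cast_nonneg k) (by positivity) (by rw [mul_comm]; exact_mod_cast h)

theorem Finset.exists_fin_injective_of_le_card {α : Type*} {F : Finset α} {L : ℕ}
    (h : L ≤ F.card) : ∃ c : Fin L → α, (∀ l, c l ∈ F) ∧ Function.Injective c :=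
  ⟨fun l => F.equivFin.symm (Fin.castLE h l), fun _ => (F.equivFin.symm _).2,
    Subtype.val_injective.comp (F.equivFin.symm.injective.comp (Fin.castLE_injective h))⟩

theorem multPattern_sum {p n : ℕ} (x : Fin p → Fin n → ZMod p) : (multPattern x).sum = p := by
  rw [multPattern, Finset.sum_map_val, Multiset.toFinset_sum_count_eq]
  simp [entriesMultiset]

def Nat.Partition.ofMultPattern {p n : ℕ} (x : Fin p → Fin n → ZMod p) : Nat.Partition p where
  parts := multPattern x
  parts_pos hi := by
    obtain ⟨g, hg, rfl⟩ := Multiset.mem_map.1 hi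
    exact Multiset.count_pos.2 (Multiset.mem_toFinset.1 hg)
  parts_sum := multPattern_sum x

theorem stmt12_general {p n : ℕ} (hp : p.Prime)
    (A : Finset (Fin n → ZMod p))
    (L : ℕ) (hL : L = ⌈(A.card : ℚ) / ((p : ℚ) * (Fintype.card (Nat.Partition p) : ℚ))⌉₊) :
    ∃ (A' : Finset (Fin n → ZMod p)) (lam : Nat.Partition p),
      A' ⊆ A ∧
      (∃ c : Fin L → Fin p → (Fin n → ZMod p),
        (∀ l, (∀ i, c l i ∈ A') ∧ ∑ i, c l i = 0 ∧ multPattern (c l) = lam.parts) ∧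
        (∀ l l', l ≠ l' → ∀ i i', c l i ≠ c l' i')) ∧
      (∀ x : Fin p → (Fin n → ZMod p), (∀ i, x i ∈ A') → ∑ i, x i = 0 →
        Multiset.card (multPattern x) ≤ Multiset.card lam.parts) := by
  obtain ⟨T, F, hTF, hcard⟩ := exists_isMaxPatternPacking (pat := Nat.Partition.ofMultPattern)
    (len := fun lam => Multiset.card lam.parts) hp.ne_zero (ZModModule.char_nsmul_eq_zero p) A
  obtain ⟨lam, hlam⟩ := exists_ceil_div_le_of_le_mul_sum hcard
  obtain ⟨c, hcF, hc⟩ := Finset.exists_fin_injective_of_le_card (hL ▸ hlam)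
  obtain ⟨hTA, hmem, hdisj, hmax⟩ := hTF lam
  refine ⟨T lam, lam, hTA,
    ⟨c, fun l => ?_, fun l l' hll' => hdisj (hcF l) (hcF l') (hc.ne hll')⟩,
    fun x hx hsum => hmax x (mem_zeroSumTuples.2 ⟨hx, hsum⟩)⟩
  obtain ⟨hcyc, hpat⟩ := hmem _ (hcF l)
  exact ⟨(mem_zeroSumTuples.1 hcyc).1, (mem_zeroSumTuples.1 hcyc).2, congrArg (·.parts) hpat⟩

/-- Let `p ≥ 5` be prime, `n ≥ 1`, `A ⊆ 𝔽_p^n` nonempty, and `L = ⌈|A|/(p·P(p))⌉` where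
`P(p)` is the number of partitions of `p`. Then there are a subset `A' ⊆ A` and a partition
`λ` of `p` such that: (i) there is a collection of `L` pairwise disjoint cycles in
`A' × ⋯ × A'` with multiplicity pattern `λ`; and (ii) every cycle in `A' × ⋯ × A'` has
multiplicity pattern of length at most the length `k` of `λ`. -/
theorem stmt12 {p n : ℕ} (hp : p.Prime) (hp5 : 5 ≤ p) (hn : 0 < n)
    (A : Finset (Fin n → ZMod p)) (hA : A.Nonempty)
    (L : ℕ) (hL : L = ⌈(A.card : ℚ) / ((p : ℚ) * (Fintype.card (Nat.Partition p) : ℚ))⌉₊) :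
    ∃ (A' : Finset (Fin n → ZMod p)) (lam : Nat.Partition p),
      A' ⊆ A ∧
      (∃ c : Fin L → Fin p → (Fin n → ZMod p),
        (∀ l, (∀ i, c l i ∈ A') ∧ ∑ i, c l i = 0 ∧ multPattern (c l) = lam.parts) ∧
        (∀ l l', l ≠ l' → ∀ i i', c l i ≠ c l' i')) ∧
      (∀ x : Fin p → (Fin n → ZMod p), (∀ i, x i ∈ A') → ∑ i, x i = 0 →
        Multiset.card (multPattern x) ≤ Multiset.card lam.parts) :=
  stmt12_general hp A L hL
end

section
/- Let p ≥ 5 be a prime and n a positive even integer. Then there exists a collection of p-tuples (x_{1,i}, x_{2,i}, …, x_{p,i})_{i=1}^L of elements of 𝔽_p^n with L = p^{n/2} such that: for each j ∈ {1, …, p} the elements x_{j,1}, …, x_{j,L} are pairwise distinct; x_{1,i} + x_{2,i} + ⋯ + x_{p,i} = 0 for every i ∈ {1, …, L}; and there are no pairwise distinct indices i_1, …, i_p ∈ {1, …, L} with x_{1,i_1} + x_{2,i_2} + ⋯ + x_{p,i_p} = 0. -/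
/-!
Take the two halves of `𝔽_p^n` to be copies of `𝔽_p^{n/2}` and enumerate `𝔽_p^{n/2}` as
`e_1, …, e_L`. The `i`-th tuple is `(e_i, e_i), (-e_i, e_i), (0, e_i), …, (0, e_i)`: it sums to
`(0, p e_i) = 0`. For a choice of indices `i_1, …, i_p` the first half of
`x_{1,i_1} + ⋯ + x_{p,i_p}` is `e_{i_1} - e_{i_2}`, so the sum vanishes only if `i_1 = i_2`.
-/

open Function

/-- `x j i` stands for `x_{j,i}`, the `j`-th entry of the `i`-th tuple; a rainbow choice of
indices is one with pairwise distinct `i_1, …, i_k`. -/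
def IsRainbowZeroSumFree {k : ℕ} {ι G : Type*} [AddCommGroup G] (x : Fin k → ι → G) : Prop :=
  (∀ j, Injective (x j)) ∧ (∀ i, ∑ j, x j i = 0) ∧
    ¬ ∃ i : Fin k → ι, Injective i ∧ ∑ j, x j (i j) = 0

section

variable {k : ℕ} {ι G H : Type*} [AddCommGroup G] [AddCommGroup H]

theorem IsRainbowZeroSumFree.map {x : Fin k → ι → G} (hx : IsRainbowZeroSumFree x)
    (φ : G →+ H) (hφ : Injective φ) : IsRainbowZeroSumFree fun j i => φ (x j i) := by
  obtain ⟨hinj, hsum, hfree⟩ := hx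
  refine ⟨fun j => hφ.comp (hinj j), fun i => by rw [← map_sum, hsum i, map_zero], ?_⟩
  rintro ⟨i, hi, hzero⟩
  exact hfree ⟨i, hi, hφ (by rwa [map_sum, map_zero])⟩

theorem sum_single_sub_single_zsmul (a b : Fin k) (v : Fin k → G) :
    ∑ j, (Pi.single a 1 - Pi.single b 1 : Fin k → ℤ) j • v j = v a - v b := by
  simp [sub_smul, Pi.single_apply, ite_smul]

theorem exists_isRainbowZeroSumFree_prod (hk : 1 < k) (hG : ∀ g : G, k • g = 0)
    {e : ι → G} (he : Injective e) : ∃ x : Fin k → ι → G × G, IsRainbowZeroSumFree x := by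
  let a : Fin k := ⟨0, by omega⟩
  let b : Fin k := ⟨1, hk⟩
  refine ⟨fun j i => ((Pi.single a 1 - Pi.single b 1 : Fin k → ℤ) j • e i, e i),
    fun j i i' h => he (congrArg Prod.snd h), fun i => ?_, ?_⟩
  · ext
    · rw [Prod.fst_sum, sum_single_sub_single_zsmul a b fun _ => e i, sub_self, Prod.fst_zero]
    · simp [Prod.snd_sum, hG]
  · rintro ⟨i, hi, hzero⟩
    have hfst : e (i a) - e (i b) = 0 := by
      simpa only [Prod.fst_sum, sum_single_sub_single_zsmul, Prod.fst_zero]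
        using congrArg Prod.fst hzero
    have hab : a = b := hi (he (sub_eq_zero.mp hfst))
    simp [a, b, Fin.ext_iff] at hab

end

theorem stmt16_general {p n : ℕ} (hp : p.Prime) (hne : Even n) :
    ∃ x : Fin p → Fin (p ^ (n / 2)) → (Fin n → ZMod p),
      (∀ j, Function.Injective (x j)) ∧
      (∀ i, ∑ j, x j i = 0) ∧
      ¬ ∃ i : Fin p → Fin (p ^ (n / 2)), Function.Injective i ∧ ∑ j, x j (i j) = 0 := by
  have := Fact.mk hp
  obtain ⟨m, rfl⟩ := hne
  rw [show (m + m) / 2 = m by omega]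
  let e : Fin (p ^ m) ≃ (Fin m → ZMod p) := (Fintype.equivFinOfCardEq (by simp)).symm
  obtain ⟨x, hx⟩ := exists_isRainbowZeroSumFree_prod hp.one_lt
    (ZModModule.char_nsmul_eq_zero p) e.injective
  let φ : (Fin m → ZMod p) × (Fin m → ZMod p) ≃+ (Fin (m + m) → ZMod p) :=
    ((LinearEquiv.sumArrowLequivProdArrow (Fin m) (Fin m) (ZMod p) (ZMod p)).symm.trans
      (LinearEquiv.funCongrLeft (ZMod p) (ZMod p) finSumFinEquiv.symm)).toAddEquiv
  exact ⟨_, hx.map φ.toAddMonoidHom φ.injective⟩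

/-- Let `p ≥ 5` be prime and `n` a positive even integer. Then there is a collection of
`p`-tuples `(x_{1,i}, …, x_{p,i})_{i=1}^L` of elements of `𝔽_p^n` with `L = p^{n/2}` such
that: for each `j` the elements `x_{j,1}, …, x_{j,L}` are pairwise distinct;
`x_{1,i} + ⋯ + x_{p,i} = 0` for every `i`; and there are no pairwise distinct indices
`i_1, …, i_p` with `x_{1,i_1} + ⋯ + x_{p,i_p} = 0`. -/
theorem stmt16 {p n : ℕ} (hp : p.Prime) (hp5 : 5 ≤ p) (hn : 0 < n) (hne : Even n) :
    ∃ x : Fin p → Fin (p ^ (n / 2)) → (Fin n → ZMod p),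
      (∀ j, Function.Injective (x j)) ∧
      (∀ i, ∑ j, x j i = 0) ∧
      ¬ ∃ i : Fin p → Fin (p ^ (n / 2)), Function.Injective i ∧ ∑ j, x j (i j) = 0 :=
  stmt16_general hp hne
end
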